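/- arXiv:2303.10567 — 3 statements merged into one kernel-verified Lean document; each statement's English description precedes it below -/
import Mathlib

section
/- Let Λ₁, Λ₂, D, K, M be symmetric positive definite real n×n matrices. Let y₁, y₂ : [0,∞) → ℝⁿ be C² curves satisfying Λᵢ·yᵢ'' + D·yᵢ' + K·yᵢ = F for i = 1, 2, where F(t) = −M·(y₁''(t) + y₂''(t)) is the inertial force of a grasped object whose velocity is −(y₁' + y₂'). Then the total storage function S_tot(t) = Σᵢ [½·yᵢ'ᵀΛᵢ·yᵢ' + ½·yᵢᵀK·yᵢ] + ½·(y₁' + y₂')ᵀM·(y₁' + y₂') satisfies S_tot'(t) ≤ −λ_min(D)·(‖y₁'(t)‖² + ‖y₂'(t)‖²) for all t ≥ 0. (Dissipation inequality in the proof of the paper's Theorem 3 on collaborative grasping by two AMs.) -/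
/-!
Differentiating the quadratic storage terms and using the symmetry of `Λᵢ`, `K`, `M`, arm `i`
contributes `yᵢ' ⬝ F - yᵢ' ⬝ D yᵢ'` by its impedance equation, while the object contributes
`(y₁' + y₂') ⬝ M (y₁'' + y₂'') = -(y₁' + y₂') ⬝ F`. The interaction forces cancel, so
`S_tot' = -(y₁' ⬝ D y₁' + y₂' ⬝ D y₂')`, and `x ⬝ D x ≥ λ_min(D) ‖x‖²` holds because
`D - λ_min(D) • 1` is positive semidefinite by the spectral theorem.
-/

open Matrix Filter Topology

/-- The minimum eigenvalue of a Hermitian (here: real symmetric) matrix. -/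
noncomputable def lamMin {n : ℕ} {D : Matrix (Fin n) (Fin n) ℝ}
    (hD : D.IsHermitian) : ℝ := ⨅ i, hD.eigenvalues i

namespace Matrix

theorem PosDef.isSymm {ι R : Type*} [CommRing R] [PartialOrder R] [StarRing R]
    [TrivialStar R] {A : Matrix ι ι R} (hA : A.PosDef) : A.IsSymm :=
  isHermitian_iff_isSymm.mp hA.isHermitian

variable {ι 𝕜 : Type*} [Fintype ι]

theorem IsSymm.dotProduct_mulVec_comm {R : Type*} [CommSemiring R] {A : Matrix ι ι R}
    (hA : A.IsSymm) (x y : ι → R) : x ⬝ᵥ (A *ᵥ y) = y ⬝ᵥ (A *ᵥ x) := by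
  rw [dotProduct_mulVec, ← mulVec_transpose, hA.eq, dotProduct_comm]

open scoped ComplexOrder in
theorem IsHermitian.posSemidef_sub_smul_one [RCLike 𝕜] [DecidableEq ι] {A : Matrix ι ι 𝕜}
    (hA : A.IsHermitian) {c : ℝ} (hc : ∀ i, c ≤ hA.eigenvalues i) :
    (A - (c : 𝕜) • 1).PosSemidef := by
  set U : Matrix ι ι 𝕜 := hA.eigenvectorUnitary.1
  have hshift : A - (c : 𝕜) • 1 =
      U * diagonal (RCLike.ofReal ∘ fun i => hA.eigenvalues i - c) * star U := by
    conv_lhs => rw [hA.spectral_theorem, Unitary.conjStarAlgAut_apply]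
    have hdiag : diagonal (RCLike.ofReal ∘ fun i => hA.eigenvalues i - c) =
        diagonal (RCLike.ofReal ∘ hA.eigenvalues) - (c : 𝕜) • (1 : Matrix ι ι 𝕜) := by
      ext i j; by_cases h : i = j <;> simp [h, Algebra.algebraMap_eq_smul_one, sub_smul]
    rw [hdiag, mul_sub, sub_mul, mul_smul_comm, smul_mul_assoc, mul_one,
      Unitary.mul_star_self_of_mem hA.eigenvectorUnitary.2]
  rw [hshift, (Unitary.isUnit_coe).posSemidef_star_right_conjugate_iff, posSemidef_diagonal_iff]
  intro i
  simpa using hc i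

end Matrix

theorem lamMin_mul_dotProduct_self_le {n : ℕ} {D : Matrix (Fin n) (Fin n) ℝ} (hD : D.IsHermitian)
    (x : Fin n → ℝ) : lamMin hD * (x ⬝ᵥ x) ≤ x ⬝ᵥ (D *ᵥ x) := by
  rcases isEmpty_or_nonempty (Fin n) with hn | hn
  · simp [dotProduct] -- `lamMin` is a junk infimum here, but both sides are `0`
  have hpsd := (hD.posSemidef_sub_smul_one fun i =>
    ciInf_le (Set.finite_range hD.eigenvalues).bddBelow i).dotProduct_mulVec_nonneg x
  simp only [sub_mulVec, smul_mulVec, one_mulVec, dotProduct_sub, dotProduct_smul,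
    star_trivial] at hpsd
  simpa [lamMin, sub_nonneg] using hpsd

section Derivatives

variable {ι 𝕜 : Type*} [Fintype ι] [NontriviallyNormedField 𝕜] {t : 𝕜}

theorem HasDerivAt.dotProduct {u v : 𝕜 → ι → 𝕜} {u' v' : ι → 𝕜}
    (hu : HasDerivAt u u' t) (hv : HasDerivAt v v' t) :
    HasDerivAt (fun s => u s ⬝ᵥ v s) (u' ⬝ᵥ v t + u t ⬝ᵥ v') t := by
  show HasDerivAt (fun s => ∑ i, u s i * v s i) (∑ i, u' i * v t i + ∑ i, u t i * v' i) t
  rw [← Finset.sum_add_distrib]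
  exact HasDerivAt.fun_sum fun i _ => (hasDerivAt_pi.mp hu i).mul (hasDerivAt_pi.mp hv i)

theorem HasDerivAt.mulVec {κ : Type*} (A : Matrix κ ι 𝕜) {v : 𝕜 → ι → 𝕜} {v' : ι → 𝕜}
    (hv : HasDerivAt v v' t) : HasDerivAt (fun s => A *ᵥ v s) (A *ᵥ v') t :=
  hasDerivAt_pi.mpr fun k => (hasDerivAt_const t (A k)).dotProduct hv |>.congr_deriv (by simp; rfl)

theorem HasDerivAt.dotProduct_mulVec_self {A : Matrix ι ι 𝕜} (hA : A.IsSymm)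
    {u : 𝕜 → ι → 𝕜} {u' : ι → 𝕜} (hu : HasDerivAt u u' t) :
    HasDerivAt (fun s => u s ⬝ᵥ (A *ᵥ u s)) (2 * (u t ⬝ᵥ (A *ᵥ u'))) t := by
  convert hu.dotProduct (hu.mulVec A) using 1
  rw [hA.dotProduct_mulVec_comm u', two_mul]

theorem ContDiff.hasDerivAt_deriv {F : Type*} [NormedAddCommGroup F] [NormedSpace 𝕜 F]
    {f : 𝕜 → F} (hf : ContDiff 𝕜 2 f) (t : 𝕜) : HasDerivAt (deriv f) (deriv (deriv f) t) t := by
  have := hf.differentiable_iteratedDeriv 1 (by norm_num)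
  rw [iteratedDeriv_one] at this
  exact (this t).hasDerivAt

end Derivatives

theorem impedance_power_balance {ι R : Type*} [Fintype ι] [CommRing R]
    {Λ D K : Matrix ι ι R} (hK : K.IsSymm) {y y' y'' f : ι → R}
    (h : Λ *ᵥ y'' + D *ᵥ y' + K *ᵥ y = f) :
    y' ⬝ᵥ (Λ *ᵥ y'') + y ⬝ᵥ (K *ᵥ y') = y' ⬝ᵥ f - y' ⬝ᵥ (D *ᵥ y') := by
  rw [hK.dotProduct_mulVec_comm y, ← h]
  simp only [dotProduct_add]
  ring

/-- Dissipation inequality in the proof of Theorem 3 (collaborative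
grasping by two AMs).  With `F = −M (y₁'' + y₂'')` the inertial force of the
grasped object, the total storage function
`S_tot = Σᵢ [½ yᵢ'ᵀ Λᵢ yᵢ' + ½ yᵢᵀ K yᵢ] + ½ (y₁'+y₂')ᵀ M (y₁'+y₂')`
satisfies `S_tot'(t) ≤ −λ_min(D) (‖y₁'(t)‖² + ‖y₂'(t)‖²)` for all `t ≥ 0`. -/
theorem stmt_7 {n : ℕ} (Λ₁ Λ₂ D K M : Matrix (Fin n) (Fin n) ℝ)
    (hΛ₁ : Λ₁.PosDef) (hΛ₂ : Λ₂.PosDef) (hD : D.PosDef) (hK : K.PosDef)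
    (hM : M.PosDef)
    (y₁ y₂ : ℝ → Fin n → ℝ) (hy₁ : ContDiff ℝ 2 y₁) (hy₂ : ContDiff ℝ 2 y₂)
    (F : ℝ → Fin n → ℝ)
    (hF : ∀ t : ℝ, F t = -(M *ᵥ (deriv (deriv y₁) t + deriv (deriv y₂) t)))
    (hODE₁ : ∀ t : ℝ, 0 ≤ t →
      Λ₁ *ᵥ (deriv (deriv y₁) t) + D *ᵥ (deriv y₁ t) + K *ᵥ (y₁ t) = F t)
    (hODE₂ : ∀ t : ℝ, 0 ≤ t →
      Λ₂ *ᵥ (deriv (deriv y₂) t) + D *ᵥ (deriv y₂ t) + K *ᵥ (y₂ t) = F t) :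
    ∀ Stot : ℝ → ℝ,
      Stot = (fun t =>
          ((1 / 2) * (deriv y₁ t ⬝ᵥ (Λ₁ *ᵥ deriv y₁ t))
            + (1 / 2) * (y₁ t ⬝ᵥ (K *ᵥ y₁ t)))
          + ((1 / 2) * (deriv y₂ t ⬝ᵥ (Λ₂ *ᵥ deriv y₂ t))
            + (1 / 2) * (y₂ t ⬝ᵥ (K *ᵥ y₂ t)))
          + (1 / 2) * ((deriv y₁ t + deriv y₂ t) ⬝ᵥ (M *ᵥ (deriv y₁ t + deriv y₂ t)))) →
      ∀ t : ℝ, 0 ≤ t →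
        deriv Stot t ≤ -(lamMin hD.isHermitian)
          * (deriv y₁ t ⬝ᵥ deriv y₁ t + deriv y₂ t ⬝ᵥ deriv y₂ t) := by
  intro Stot hStot t ht
  have hv₁ := (hy₁.differentiable two_ne_zero t).hasDerivAt
  have hv₂ := (hy₂.differentiable two_ne_zero t).hasDerivAt
  have ha₁ := hy₁.hasDerivAt_deriv t
  have ha₂ := hy₂.hasDerivAt_deriv t
  have hS : HasDerivAt Stot
      (-(deriv y₁ t ⬝ᵥ (D *ᵥ deriv y₁ t) + deriv y₂ t ⬝ᵥ (D *ᵥ deriv y₂ t))) t := by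
    rw [hStot]
    refine ((((ha₁.dotProduct_mulVec_self hΛ₁.isSymm).const_mul (1 / 2 : ℝ)).add
        ((hv₁.dotProduct_mulVec_self hK.isSymm).const_mul (1 / 2 : ℝ))).add
      (((ha₂.dotProduct_mulVec_self hΛ₂.isSymm).const_mul (1 / 2 : ℝ)).add
        ((hv₂.dotProduct_mulVec_self hK.isSymm).const_mul (1 / 2 : ℝ)))).add
      (((ha₁.add ha₂).dotProduct_mulVec_self hM.isSymm).const_mul (1 / 2 : ℝ)) |>.congr_deriv ?_
    have hP₁ := impedance_power_balance hK.isSymm (hODE₁ t ht)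
    have hP₂ := impedance_power_balance hK.isSymm (hODE₂ t ht)
    have hObj : M *ᵥ (deriv (deriv y₁) t + deriv (deriv y₂) t) = -F t := by rw [hF t, neg_neg]
    rw [Pi.add_apply, hObj, dotProduct_neg, add_dotProduct]
    linarith
  rw [hS.deriv]
  linarith [lamMin_mul_dotProduct_self_le hD.isHermitian (deriv y₁ t),
    lamMin_mul_dotProduct_self_le hD.isHermitian (deriv y₂ t)]
end

section
/- Let Λ₁, Λ₂, D, K, M be symmetric positive definite real n×n matrices and let v_new : [0,∞) → ℝⁿ be a C¹ external velocity input. Let y₁, y₂ : [0,∞) → ℝⁿ be C² curves and let the object velocity be v = v_new − y₁' − y₂' with interaction force F = M·v', and suppose Λᵢ·yᵢ'' + D·yᵢ' + K·yᵢ = F for i = 1, 2. Then the total storage function S_tot = Σᵢ [½·yᵢ'ᵀΛᵢ·yᵢ' + ½·yᵢᵀK·yᵢ] + ½·vᵀM·v satisfies S_tot'(t) ≤ v_new(t)ᵀF(t) for all t; i.e., the new input–output pair (v_new, F) of the interconnected two-AM-plus-object system is passive. (The claim of Fig. 3(a)/Section III.D.1 that the interconnection exposes a new passive port, enabling modular addition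 of further AMs.) -/
/-!
Each agile module is a mass–spring–damper driven by the interaction force `F`, so its energy
`½ ẏᵀΛẏ + ½ yᵀKy` changes at rate `ẏᵀF - ẏᵀDẏ ≤ ẏᵀF`, while the object's kinetic energy
`½ vᵀMv` changes at rate `vᵀF`. Since `v = v_new - ẏ₁ - ẏ₂`, the port powers `ẏᵢᵀF` cancel in
the sum, and the total energy grows at most at rate `v_newᵀF`, the dissipation `ẏᵢᵀDẏᵢ` being
nonnegative.
-/

open Matrix Filter Topology

section Derivatives

variable {𝕜 ι : Type*} [NontriviallyNormedField 𝕜] [Fintype ι]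

theorem HasDerivAt.dotProduct_s15 {f g : 𝕜 → ι → 𝕜} {f' g' : ι → 𝕜} {t : 𝕜}
    (hf : HasDerivAt f f' t) (hg : HasDerivAt g g' t) :
    HasDerivAt (fun s => f s ⬝ᵥ g s) (f' ⬝ᵥ g t + f t ⬝ᵥ g') t :=
  (HasDerivAt.fun_sum (u := Finset.univ) fun i _ =>
    (hasDerivAt_pi.1 hf i).fun_mul (hasDerivAt_pi.1 hg i)).congr_deriv Finset.sum_add_distrib

theorem HasDerivAt.matrix_mulVec {κ : Type*} [Fintype κ] (A : Matrix κ ι 𝕜) {f : 𝕜 → ι → 𝕜}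
    {f' : ι → 𝕜} {t : 𝕜} (hf : HasDerivAt f f' t) :
    HasDerivAt (fun s => A *ᵥ f s) (A *ᵥ f') t :=
  hasDerivAt_pi.2 fun i =>
    ((hasDerivAt_const t (A i)).dotProduct_s15 hf).congr_deriv (by rw [zero_dotProduct, zero_add]; rfl)

end Derivatives

theorem Matrix.IsSymm.dotProduct_mulVec_comm_s15 {ι α : Type*} [Fintype ι] [CommSemiring α]
    {A : Matrix ι ι α} (hA : A.IsSymm) (x y : ι → α) : x ⬝ᵥ A *ᵥ y = y ⬝ᵥ A *ᵥ x := by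
  simpa only [hA.eq] using dotProduct_transpose_mulVec A x y

theorem HasDerivAt.half_dotProduct_mulVec_self {ι : Type*} [Fintype ι] {A : Matrix ι ι ℝ}
    (hA : A.IsSymm) {f : ℝ → ι → ℝ} {f' : ι → ℝ} {t : ℝ} (hf : HasDerivAt f f' t) :
    HasDerivAt (fun s => 1 / 2 * (f s ⬝ᵥ A *ᵥ f s)) (f t ⬝ᵥ A *ᵥ f') t := by
  refine ((hf.dotProduct_s15 (hf.matrix_mulVec A)).const_mul (1 / 2)).congr_deriv ?_
  rw [hA.dotProduct_mulVec_comm_s15 f']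
  ring

theorem hasDerivAt_impedance_storage {ι : Type*} [Fintype ι] {Λ D K : Matrix ι ι ℝ}
    (hΛ : Λ.IsSymm) (hK : K.IsSymm) {y : ℝ → ι → ℝ} {F : ι → ℝ} {t : ℝ}
    (hy : DifferentiableAt ℝ y t) (hy' : DifferentiableAt ℝ (deriv y) t)
    (hODE : Λ *ᵥ deriv (deriv y) t + D *ᵥ deriv y t + K *ᵥ y t = F) :
    HasDerivAt (fun s => 1 / 2 * (deriv y s ⬝ᵥ Λ *ᵥ deriv y s) + 1 / 2 * (y s ⬝ᵥ K *ᵥ y s))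
      (deriv y t ⬝ᵥ F - deriv y t ⬝ᵥ D *ᵥ deriv y t) t := by
  refine ((hy'.hasDerivAt.half_dotProduct_mulVec_self hΛ).add
    (hy.hasDerivAt.half_dotProduct_mulVec_self hK)).congr_deriv ?_
  rw [hK.dotProduct_mulVec_comm_s15 (y t), ← hODE]
  simp only [dotProduct_add]
  ring

/-- The interconnected two-AM-plus-object system exposes a new
passive port (Fig. 3(a) / Section III.D.1).  With object velocity
`v = v_new − y₁' − y₂'` and interaction force `F = M v'`, the total storage
function `S_tot = Σᵢ [½ yᵢ'ᵀ Λᵢ yᵢ' + ½ yᵢᵀ K yᵢ] + ½ vᵀ M v` satisfies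
`S_tot'(t) ≤ v_new(t)ᵀ F(t)` for all `t ≥ 0`. -/
theorem stmt_15 {n : ℕ} (Λ₁ Λ₂ D K M : Matrix (Fin n) (Fin n) ℝ)
    (hΛ₁ : Λ₁.PosDef) (hΛ₂ : Λ₂.PosDef) (hD : D.PosDef) (hK : K.PosDef)
    (hM : M.PosDef)
    (vnew : ℝ → Fin n → ℝ) (hvnew : ContDiff ℝ 1 vnew)
    (y₁ y₂ : ℝ → Fin n → ℝ) (hy₁ : ContDiff ℝ 2 y₁) (hy₂ : ContDiff ℝ 2 y₂)
    (v F : ℝ → Fin n → ℝ)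
    (hv : v = fun t => vnew t - deriv y₁ t - deriv y₂ t)
    (hF : ∀ t : ℝ, F t = M *ᵥ (deriv v t))
    (hODE₁ : ∀ t : ℝ, 0 ≤ t →
      Λ₁ *ᵥ (deriv (deriv y₁) t) + D *ᵥ (deriv y₁ t) + K *ᵥ (y₁ t) = F t)
    (hODE₂ : ∀ t : ℝ, 0 ≤ t →
      Λ₂ *ᵥ (deriv (deriv y₂) t) + D *ᵥ (deriv y₂ t) + K *ᵥ (y₂ t) = F t) :
    ∀ Stot : ℝ → ℝ,
      Stot = (fun t =>
          ((1 / 2) * (deriv y₁ t ⬝ᵥ (Λ₁ *ᵥ deriv y₁ t))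
            + (1 / 2) * (y₁ t ⬝ᵥ (K *ᵥ y₁ t)))
          + ((1 / 2) * (deriv y₂ t ⬝ᵥ (Λ₂ *ᵥ deriv y₂ t))
            + (1 / 2) * (y₂ t ⬝ᵥ (K *ᵥ y₂ t)))
          + (1 / 2) * (v t ⬝ᵥ (M *ᵥ v t))) →
      ∀ t : ℝ, 0 ≤ t → deriv Stot t ≤ vnew t ⬝ᵥ F t := by
  intro Stot hStot t ht
  have hy₁' : ContDiff ℝ 1 (deriv y₁) := hy₁.deriv'
  have hy₂' : ContDiff ℝ 1 (deriv y₂) := hy₂.deriv'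
  have hvdiff : DifferentiableAt ℝ v t := by
    rw [hv]
    exact ((hvnew.sub hy₁').sub hy₂').differentiable one_ne_zero t
  have h₁ := hasDerivAt_impedance_storage (isHermitian_iff_isSymm.1 hΛ₁.1)
    (isHermitian_iff_isSymm.1 hK.1) (hy₁.differentiable (by norm_num) t)
    (hy₁'.differentiable one_ne_zero t) (hODE₁ t ht)
  have h₂ := hasDerivAt_impedance_storage (isHermitian_iff_isSymm.1 hΛ₂.1)
    (isHermitian_iff_isSymm.1 hK.1) (hy₂.differentiable (by norm_num) t)
    (hy₂'.differentiable one_ne_zero t) (hODE₂ t ht)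
  have hobj := hvdiff.hasDerivAt.half_dotProduct_mulVec_self (isHermitian_iff_isSymm.1 hM.1)
  have hport :
      v t ⬝ᵥ M *ᵥ deriv v t = vnew t ⬝ᵥ F t - deriv y₁ t ⬝ᵥ F t - deriv y₂ t ⬝ᵥ F t := by
    rw [← hF t, hv]
    simp only [sub_dotProduct]
  have hdiss₁ : 0 ≤ deriv y₁ t ⬝ᵥ D *ᵥ deriv y₁ t := hD.posSemidef.dotProduct_mulVec_nonneg _
  have hdiss₂ : 0 ≤ deriv y₂ t ⬝ᵥ D *ᵥ deriv y₂ t := hD.posSemidef.dotProduct_mulVec_nonneg _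
  rw [hStot, ((h₁.fun_add h₂).fun_add hobj).deriv, hport]
  linarith
end

section
/- Let m = n + 6, let M be a symmetric positive definite real m×m matrix, let J be a real 6×m matrix, and let Z be a real n×m matrix of full row rank with Z·Jᵀ = 0. Then Z·M·Zᵀ is symmetric positive definite (in particular invertible), and the dynamically consistent nullspace projector N = (Z·M·Zᵀ)⁻¹·Z·M satisfies N·M⁻¹·Jᵀ = 0. Consequently, if T is the m×m matrix whose first 6 rows are J and last n rows are N, the transformed inverse inertia T·M⁻¹·Tᵀ is block diagonal with respect to the (6, n) partition. (The inertial-decoupling property of the coordinate transformation of Section II.B, which makes the transformed inertia matrix Λ_ξ = (T·M⁻¹·Tᵀ)⁻¹ block-diagonal.) -/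
/-!
Full row rank of `Z` makes `x ↦ Zᵀ x` injective, so `xᵀ (Z M Zᵀ) x = (Zᵀ x)ᵀ M (Zᵀ x) > 0` for
`x ≠ 0`. Since `N M⁻¹ = (Z M Zᵀ)⁻¹ Z`, the identity `Z Jᵀ = 0` gives `N M⁻¹ Jᵀ = 0`; transposing it
with the symmetric `M⁻¹` kills the other off-diagonal block `J M⁻¹ Nᵀ` of `T M⁻¹ Tᵀ` as well.
-/

open Matrix

namespace Matrix

variable {k l m : Type*} [Fintype m]

theorem linearIndependent_row_of_rank_eq_card [Fintype k] {R : Type*} [Field R]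
    {A : Matrix k m R} (hA : A.rank = Fintype.card k) : LinearIndependent R A.row :=
  linearIndependent_iff_card_eq_finrank_span.mpr (hA ▸ A.rank_eq_finrank_span_row)

theorem PosDef.mul_mul_transpose_of_rank_eq_card [Fintype k] {M : Matrix m m ℝ} (hM : M.PosDef)
    {Z : Matrix k m ℝ} (hZ : Z.rank = Fintype.card k) : (Z * M * Zᵀ).PosDef := by
  simpa only [conjTranspose_eq_transpose_of_trivial] using
    hM.mul_mul_conjTranspose_same
      (vecMul_injective_iff.mpr (linearIndependent_row_of_rank_eq_card hZ))

variable {R : Type*} [CommRing R]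

noncomputable def dynamicallyConsistentProjector [Fintype k] [DecidableEq k]
    (M : Matrix m m R) (Z : Matrix k m R) : Matrix k m R :=
  (Z * M * Zᵀ)⁻¹ * (Z * M)

theorem dynamicallyConsistentProjector_mul_inv_mul_transpose [Fintype k] [DecidableEq k]
    [DecidableEq m] {M : Matrix m m R} (hM : IsUnit M.det) {Z : Matrix k m R}
    {J : Matrix l m R} (hZJ : Z * Jᵀ = 0) :
    dynamicallyConsistentProjector M Z * M⁻¹ * Jᵀ = 0 := by
  rw [dynamicallyConsistentProjector, Matrix.mul_assoc _ (Z * M),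
    mul_nonsing_inv_cancel_right _ _ hM, Matrix.mul_assoc, hZJ, Matrix.mul_zero]

theorem fromRows_mul_mul_transpose_fromRows_of_mul_mul_transpose_eq_zero {A : Matrix m m R}
    (hA : A.IsSymm) {J : Matrix k m R} {N : Matrix l m R} (hNJ : N * A * Jᵀ = 0) :
    fromRows J N * A * (fromRows J N)ᵀ = fromBlocks (J * A * Jᵀ) 0 0 (N * A * Nᵀ) := by
  have hJN : J * A * Nᵀ = 0 := by
    simpa only [transpose_mul, transpose_transpose, hA.eq, transpose_zero, Matrix.mul_assoc]
      using congrArg transpose hNJ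
  rw [fromRows_mul, transpose_fromRows, fromRows_mul_fromCols, hNJ, hJN]

end Matrix

/-- Inertial decoupling property of the coordinate transformation
of Section II.B.  For a positive definite inertia `M`, a task Jacobian `J`
(6 rows) and a full-row-rank nullspace base matrix `Z` with `Z Jᵀ = 0`:
`Z M Zᵀ` is positive definite, the dynamically consistent nullspace projector
`N = (Z M Zᵀ)⁻¹ Z M` satisfies `N M⁻¹ Jᵀ = 0`, and the transformed inverse
inertia `T M⁻¹ Tᵀ` (with `T = [J; N]`) is block diagonal. -/
theorem stmt_17 {n : ℕ}
    (M : Matrix (Fin (n + 6)) (Fin (n + 6)) ℝ) (hM : M.PosDef)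
    (J : Matrix (Fin 6) (Fin (n + 6)) ℝ)
    (Z : Matrix (Fin n) (Fin (n + 6)) ℝ) (hZ : Z.rank = n)
    (hZJ : Z * Jᵀ = 0) :
    (Z * M * Zᵀ).PosDef ∧
    ∀ N : Matrix (Fin n) (Fin (n + 6)) ℝ,
      N = (Z * M * Zᵀ)⁻¹ * (Z * M) →
      N * M⁻¹ * Jᵀ = 0 ∧
      Matrix.fromRows J N * M⁻¹ * (Matrix.fromRows J N)ᵀ
        = Matrix.fromBlocks (J * M⁻¹ * Jᵀ) 0 0 (N * M⁻¹ * Nᵀ) := by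
  refine ⟨hM.mul_mul_transpose_of_rank_eq_card (by rwa [Fintype.card_fin]), fun N hN => ?_⟩
  have hNJ : N * M⁻¹ * Jᵀ = 0 :=
    hN ▸ dynamicallyConsistentProjector_mul_inv_mul_transpose hM.det_pos.ne'.isUnit hZJ
  exact ⟨hNJ, fromRows_mul_mul_transpose_fromRows_of_mul_mul_transpose_eq_zero
    (isHermitian_iff_isSymm.mp hM.isHermitian).inv hNJ⟩
end
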